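/- Let N ≥ 1 and fix a degree-monotone enumeration (α_k)_{k≥1} of the multi-indices of ℕ^N with total degrees s_k. Then s_k / k^{1/N} converges to (N!)^{1/N} as k → ∞. -/

import Mathlib

open Finset

def Sle (N d : ℕ) : Finset (Fin N → ℕ) :=
  (Fintype.piFinset fun _ : Fin N => Finset.range (d+1)).filter fun β => ∑ j, β j ≤ d

lemma mem_Sle {N d : ℕ} {β : Fin N → ℕ} : β ∈ Sle N d ↔ ∑ j, β j ≤ d := by
  simp only [Sle, Finset.mem_filter, Fintype.mem_piFinset, Finset.mem_range]
  refine ⟨fun h => h.2, fun h => ⟨fun j => Nat.lt_succ_of_le ?_, h⟩⟩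
  exact le_trans (Finset.single_le_sum (fun i _ => Nat.zero_le _) (Finset.mem_univ j)) h

lemma card_Sle : ∀ N d : ℕ, (Sle N d).card = (d + N).choose N
  | 0, d => by
    have h : Sle 0 d = {(fun i => i.elim0)} := by
      ext β
      simp only [mem_Sle, Finset.mem_singleton]
      constructor
      · intro _; funext i; exact i.elim0
      · intro _; simp
    rw [h]; simp
  | N+1, d => by
    have key : ((Finset.range (d+1)).sigma fun t => Sle N (d - t)).card
        = (Sle (N+1) d).card := by
      refine Finset.card_bij (fun p _ => Fin.cons p.1 p.2) ?_ ?_ ?_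
      · rintro ⟨t, β⟩ hp
        simp only [Finset.mem_sigma, Finset.mem_range, mem_Sle] at hp
        rw [mem_Sle, Fin.sum_cons]
        dsimp only
        omega
      · rintro ⟨t, β⟩ _ ⟨t', β'⟩ _ h
        obtain ⟨h1, h2⟩ := Fin.cons_inj.mp h
        subst h1; subst h2; rfl
      · intro γ hγ
        have hγ' := mem_Sle.mp hγ
        have hsum : ∑ j, γ j = γ 0 + ∑ j : Fin N, Fin.tail γ j := Fin.sum_univ_succ γ
        refine ⟨⟨γ 0, Fin.tail γ⟩, ?_, Fin.cons_self_tail γ⟩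
        simp only [Finset.mem_sigma, Finset.mem_range, mem_Sle]
        omega
    rw [← key, Finset.card_sigma]
    have h2 : ∀ t ∈ Finset.range (d+1), (Sle N (d-t)).card = (d - t + N).choose N :=
      fun t _ => card_Sle N (d-t)
    rw [Finset.sum_congr rfl h2]
    have h3 : ∑ t ∈ Finset.range (d+1), (d - t + N).choose N
        = ∑ t ∈ Finset.range (d+1), (t + N).choose N := by
      simpa using Finset.sum_range_reflect (fun e => (e + N).choose N) (d+1)
    rw [h3, Nat.sum_range_add_choose d N, Nat.add_assoc]

lemma pnat_initseg (T : Finset ℕ+) (hdc : ∀ a b : ℕ+, a ≤ b → b ∈ T → a ∈ T) (k : ℕ+) :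
    k ∈ T ↔ (k : ℕ) ≤ T.card := by
  constructor
  · intro hk
    have hsub : Finset.Icc 1 k ⊆ T := fun a ha => hdc a k (Finset.mem_Icc.mp ha).2 hk
    have h := Finset.card_le_card hsub
    rw [PNat.card_Icc] at h
    simpa using h
  · intro hk
    by_contra hkT
    have hsub : T ⊆ Finset.Ico 1 k := by
      intro b hb
      rw [Finset.mem_Ico]
      refine ⟨b.one_le, ?_⟩
      by_contra h
      push_neg at h
      exact hkT (hdc k b h hb)
    have h := Finset.card_le_card hsub
    rw [PNat.card_Ico] at h
    have h1 : 1 ≤ (k : ℕ) := k.one_le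
    simp only [PNat.one_coe] at h
    omega


lemma rpow_pow_inv {N : ℕ} (hN : 1 ≤ N) {a : ℝ} (ha : 0 ≤ a) :
    (a ^ N) ^ ((1 : ℝ) / N) = a := by
  have hN0 : (N : ℝ) ≠ 0 := Nat.cast_ne_zero.mpr (by omega)
  rw [← Real.rpow_natCast a N, ← Real.rpow_mul ha, mul_one_div, div_self hN0, Real.rpow_one]

lemma le_rpow_of_pow_le {N : ℕ} (hN : 1 ≤ N) {a b : ℝ} (ha : 0 ≤ a) (h : a ^ N ≤ b) :
    a ≤ b ^ ((1 : ℝ) / N) := by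
  rw [← rpow_pow_inv hN ha]
  exact Real.rpow_le_rpow (by positivity) h (by positivity)

lemma rpow_le_of_le_pow {N : ℕ} (hN : 1 ≤ N) {a x : ℝ} (ha : 0 ≤ a) (hx : 0 ≤ x)
    (h : x ≤ a ^ N) : x ^ ((1 : ℝ) / N) ≤ a := by
  rw [← rpow_pow_inv hN ha]
  exact Real.rpow_le_rpow hx h (by positivity)



/-- For a degree-monotone enumeration `(α k)` (indexed by the positive
integers) of the multi-indices of `ℕ^N` with total degrees `s k = ∑ j, α k j`, one has
`s k / k ^ (1/N) → (N!) ^ (1/N)` as `k → ∞`. -/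
theorem stmt13 (N : ℕ) (hN : 1 ≤ N) (α : ℕ+ → (Fin N → ℕ))
    (hbij : Function.Bijective α)
    (hmono : Monotone fun k : ℕ+ => ∑ j, α k j) :
    Filter.Tendsto
      (fun k : ℕ+ => ((∑ j, α k j : ℕ) : ℝ) / (((k : ℕ) : ℝ) ^ ((1 : ℝ) / N)))
      Filter.atTop (nhds ((N.factorial : ℝ) ^ ((1 : ℝ) / N))) := by
  set e := Equiv.ofBijective α hbij with he
  -- the key position/degree equivalence
  have hkey : ∀ (d : ℕ) (k : ℕ+), (∑ j, α k j ≤ d) ↔ (k : ℕ) ≤ (d + N).choose N := by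
    intro d k
    set T : Finset ℕ+ := (Sle N d).map ⟨e.symm, e.symm.injective⟩ with hT
    have hmem : ∀ m : ℕ+, m ∈ T ↔ ∑ j, α m j ≤ d := by
      intro m
      simp only [hT, Finset.mem_map, Function.Embedding.coeFn_mk]
      constructor
      · rintro ⟨β, hβ, rfl⟩
        have hβα : α (e.symm β) = β := e.apply_symm_apply β
        rw [show ∑ j, α (e.symm β) j = ∑ j, β j by rw [hβα]]
        exact mem_Sle.mp hβ
      · intro hm
        exact ⟨α m, mem_Sle.mpr hm, e.symm_apply_apply m⟩
    have hcard : T.card = (d + N).choose N := by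
      rw [hT, Finset.card_map, card_Sle]
    have hdc : ∀ a b : ℕ+, a ≤ b → b ∈ T → a ∈ T := by
      intro a b hab hb
      rw [hmem] at hb ⊢
      exact le_trans (hmono hab) hb
    rw [← hmem k, pnat_initseg T hdc k, hcard]
  have hub : ∀ k : ℕ+, (k : ℕ) ≤ (∑ j, α k j + N).choose N :=
    fun k => (hkey _ k).mp le_rfl
  have hs1 : ∀ k : ℕ+, 2 ≤ (k : ℕ) → 1 ≤ ∑ j, α k j := by
    intro k hk
    by_contra h
    push_neg at h
    have h0 : ∑ j, α k j ≤ 0 := by omega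
    have h1 := (hkey 0 k).mp h0
    simp only [Nat.zero_add, Nat.choose_self] at h1
    omega
  have hlbN : ∀ k : ℕ+, 1 ≤ ∑ j, α k j → (∑ j, α k j - 1 + N).choose N < (k : ℕ) := by
    intro k hk1
    by_contra h
    push_neg at h
    have h2 := (hkey (∑ j, α k j - 1) k).mpr h
    omega
  -- factorial-power bounds on binomial coefficients
  have hA : ∀ d : ℕ, N.factorial * (d + N).choose N ≤ (d + N) ^ N := by
    intro d
    rw [← Nat.ascFactorial_eq_factorial_mul_choose]
    exact Nat.ascFactorial_le_pow_add d N
  have hBn : ∀ d : ℕ, d ^ N ≤ N.factorial * (d + N).choose N := by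
    intro d
    rw [← Nat.ascFactorial_eq_factorial_mul_choose]
    exact le_trans (Nat.pow_le_pow_left (Nat.le_succ d) N)
      (Nat.pow_succ_le_ascFactorial (d + 1) N)
  have hN0 : (0 : ℝ) < (N : ℝ) := by exact_mod_cast Nat.lt_of_lt_of_le Nat.zero_lt_one hN
  have h1N : (0 : ℝ) < (1 : ℝ) / N := by positivity
  -- limits plumbing
  have hn : Filter.Tendsto (fun k : ℕ+ => (k : ℕ)) Filter.atTop Filter.atTop := by
    refine Filter.tendsto_atTop_atTop_of_monotone (fun a b h => (PNat.coe_le_coe a b).mpr h) ?_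
    intro b
    exact ⟨⟨b + 1, Nat.succ_pos b⟩, Nat.le_succ b⟩
  have hcast : Filter.Tendsto (fun k : ℕ+ => ((k : ℕ) : ℝ)) Filter.atTop Filter.atTop :=
    tendsto_natCast_atTop_atTop.comp hn
  have hxr : Filter.Tendsto (fun k : ℕ+ => ((k : ℕ) : ℝ) ^ ((1 : ℝ) / N))
      Filter.atTop Filter.atTop := (tendsto_rpow_atTop h1N).comp hcast
  have hNd : Filter.Tendsto (fun k : ℕ+ => (N : ℝ) / ((k : ℕ) : ℝ) ^ ((1 : ℝ) / N))
      Filter.atTop (nhds 0) := tendsto_const_nhds.div_atTop hxr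
  have h1d : Filter.Tendsto (fun k : ℕ+ => (1 : ℝ) / ((k : ℕ) : ℝ) ^ ((1 : ℝ) / N))
      Filter.atTop (nhds 0) := tendsto_const_nhds.div_atTop hxr
  have hg : Filter.Tendsto
      (fun k : ℕ+ => (N.factorial : ℝ) ^ ((1 : ℝ) / N) - (N : ℝ) / ((k : ℕ) : ℝ) ^ ((1 : ℝ) / N))
      Filter.atTop (nhds ((N.factorial : ℝ) ^ ((1 : ℝ) / N))) := by
    simpa using tendsto_const_nhds.sub hNd
  have hh : Filter.Tendsto
      (fun k : ℕ+ => (N.factorial : ℝ) ^ ((1 : ℝ) / N) + (1 : ℝ) / ((k : ℕ) : ℝ) ^ ((1 : ℝ) / N))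
      Filter.atTop (nhds ((N.factorial : ℝ) ^ ((1 : ℝ) / N))) := by
    simpa using tendsto_const_nhds.add h1d
  -- eventual bounds
  have hc : ∀ k : ℕ+, (0 : ℝ) < ((k : ℕ) : ℝ) ^ ((1 : ℝ) / N) := by
    intro k
    exact Real.rpow_pos_of_pos (by exact_mod_cast k.pos) _
  have hev1 : ∀ᶠ k : ℕ+ in Filter.atTop,
      (N.factorial : ℝ) ^ ((1 : ℝ) / N) - (N : ℝ) / ((k : ℕ) : ℝ) ^ ((1 : ℝ) / N)
        ≤ ((∑ j, α k j : ℕ) : ℝ) / (((k : ℕ) : ℝ) ^ ((1 : ℝ) / N)) := by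
    refine Filter.eventually_atTop.2 ⟨2, fun k hk2 => ?_⟩
    set d := ∑ j, α k j with hd
    set c := ((k : ℕ) : ℝ) ^ ((1 : ℝ) / N) with hcdef
    -- N! * k ≤ (d + N)^N
    have hnat : N.factorial * (k : ℕ) ≤ (d + N) ^ N :=
      le_trans (Nat.mul_le_mul_left _ (hub k)) (hA d)
    have hreal : (N.factorial : ℝ) * (k : ℕ) ≤ ((d : ℝ) + N) ^ N := by
      exact_mod_cast hnat
    have hr1 : ((N.factorial : ℝ) * (k : ℕ)) ^ ((1 : ℝ) / N) ≤ (d : ℝ) + N :=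
      rpow_le_of_le_pow hN (by positivity) (by positivity) hreal
    have hmul : ((N.factorial : ℝ) * (k : ℕ)) ^ ((1 : ℝ) / N)
        = (N.factorial : ℝ) ^ ((1 : ℝ) / N) * c := by
      rw [hcdef, Real.mul_rpow (by positivity) (by positivity)]
    rw [hmul] at hr1
    -- conclude by division
    rw [sub_le_iff_le_add, ← add_div, le_div_iff₀ (hc k)]
    exact hr1
  have hev2 : ∀ᶠ k : ℕ+ in Filter.atTop,
      ((∑ j, α k j : ℕ) : ℝ) / (((k : ℕ) : ℝ) ^ ((1 : ℝ) / N))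
        ≤ (N.factorial : ℝ) ^ ((1 : ℝ) / N) + (1 : ℝ) / ((k : ℕ) : ℝ) ^ ((1 : ℝ) / N) := by
    refine Filter.eventually_atTop.2 ⟨2, fun k hk2 => ?_⟩
    have hk2' : (2 : ℕ) ≤ (k : ℕ) := by exact_mod_cast (PNat.coe_le_coe 2 k).mpr hk2
    set d := ∑ j, α k j with hd
    set c := ((k : ℕ) : ℝ) ^ ((1 : ℝ) / N) with hcdef
    have hd1 : 1 ≤ d := hs1 k hk2'
    have hnat : (d - 1) ^ N ≤ N.factorial * (k : ℕ) :=
      le_trans (hBn (d - 1))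
        (Nat.mul_le_mul_left _ (le_of_lt (hlbN k hd1)))
    have hreal : ((d : ℝ) - 1) ^ N ≤ (N.factorial : ℝ) * (k : ℕ) := by
      have : (((d - 1 : ℕ) : ℝ)) ^ N ≤ ((N.factorial * (k : ℕ) : ℕ) : ℝ) := by
        exact_mod_cast hnat
      rwa [Nat.cast_sub hd1, Nat.cast_one, Nat.cast_mul] at this
    have hr1 : (d : ℝ) - 1 ≤ ((N.factorial : ℝ) * (k : ℕ)) ^ ((1 : ℝ) / N) := by
      refine le_rpow_of_pow_le hN ?_ hreal
      have : (1 : ℝ) ≤ (d : ℝ) := by exact_mod_cast hd1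
      linarith
    have hmul : ((N.factorial : ℝ) * (k : ℕ)) ^ ((1 : ℝ) / N)
        = (N.factorial : ℝ) ^ ((1 : ℝ) / N) * c := by
      rw [hcdef, Real.mul_rpow (by positivity) (by positivity)]
    rw [hmul] at hr1
    have hexp : ((N.factorial : ℝ) ^ ((1 : ℝ) / N) + 1 / c) * c
        = (N.factorial : ℝ) ^ ((1 : ℝ) / N) * c + 1 := by
      rw [add_mul, one_div_mul_cancel (a := c) (hc k).ne']
    rw [div_le_iff₀ (hc k), hexp]
    linarith
  exact tendsto_of_tendsto_of_tendsto_of_le_of_le' hg hh hev1 hev2
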